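/- For integers m ≥ 1, 1 ≤ l ≤ m, reals r, s with r + s > -1, and hook τ = (τ₁, 1^{l-1}), writing m_i = τ_i + m - i, one has ∏_{i=1}^{l} ∏_{j=i+1}^{m} (m_i + m_j + r + s + 1)(m_i - m_j) = ∏_{i=1}^{l} Γ(τ_i + 2m - 2i + r + s + 2) Γ(m_i + 1) / ((τ_i + 2m - i - l + r + s + 1)(τ_i + l - i) Γ(τ_i) Γ(m_i + r + s + 1)). -/
import Mathlib

lemma gamma_prod_asc (x : ℝ) (hx : 0 < x) (n : ℕ) :
    ∏ k ∈ Finset.range n, (x + k) = Real.Gamma (x + n) / Real.Gamma x := by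
  induction n with
  | zero => simp [div_self (Real.Gamma_pos_of_pos hx).ne']
  | succ n ih =>
    rw [Finset.prod_range_succ, ih]
    have h1 : x + (n:ℝ) ≠ 0 := by positivity
    have : Real.Gamma (x + (n+1:ℕ)) = (x + n) * Real.Gamma (x + n) := by
      rw [show (x + ((n+1:ℕ):ℝ)) = (x + n) + 1 by push_cast; ring,
        Real.Gamma_add_one h1]
    rw [this]
    have h2 : Real.Gamma x ≠ 0 := (Real.Gamma_pos_of_pos hx).ne'
    field_simp

lemma gamma_prod_desc (x : ℝ) (n : ℕ) (hx : 0 < x - n + 1) :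
    ∏ k ∈ Finset.range n, (x - k) = Real.Gamma (x + 1) / Real.Gamma (x - n + 1) := by
  induction n with
  | zero =>
    have : 0 < x + 1 := by simpa using hx
    simp [div_self (Real.Gamma_pos_of_pos this).ne']
  | succ n ih =>
    have hx' : 0 < x - n := by push_cast at hx ⊢; linarith
    have ih' := ih (by linarith)
    rw [Finset.prod_range_succ, ih']
    have h1 : Real.Gamma (x - n + 1) = (x - n) * Real.Gamma (x - n) := by
      rw [Real.Gamma_add_one hx'.ne']
    have h2 : Real.Gamma (x - n) ≠ 0 := (Real.Gamma_pos_of_pos hx').ne'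
    rw [show (x - ((n+1:ℕ):ℝ) + 1) = x - n by push_cast; ring, h1]
    field_simp

lemma prod_Ioc_sub (a b : ℕ) (hab : a ≤ b) (x : ℝ) (hx : 0 < x - b) :
    ∏ j ∈ Finset.Ioc a b, (x - j) = Real.Gamma (x - a) / Real.Gamma (x - b) := by
  have hrw : Finset.Ioc a b = Finset.Ico (a+1) (b+1) := by
    rw [Finset.Ico_add_one_right_eq_Icc, Finset.Icc_add_one_left_eq_Ioc]
  rw [hrw, Finset.prod_Ico_eq_prod_range]
  have hn : b + 1 - (a + 1) = b - a := by omega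
  rw [hn]
  have : ∀ k ∈ Finset.range (b - a), (x - ((a + 1 + k : ℕ):ℝ)) = (x - a - 1) - k := by
    intro k _; push_cast; ring
  have hcast : ((b - a : ℕ):ℝ) = (b:ℝ) - a := Nat.cast_sub hab
  rw [Finset.prod_congr rfl this, gamma_prod_desc (x - a - 1) (b - a)
    (by rw [hcast]; linarith)]
  congr 2
  · ring
  · rw [hcast]; ring

lemma prod_Ioc_add (a b : ℕ) (hab : a ≤ b) (x : ℝ) (hx : 0 < x + a + 1) :
    ∏ j ∈ Finset.Ioc a b, (x + j) = Real.Gamma (x + b + 1) / Real.Gamma (x + a + 1) := by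
  have hrw : Finset.Ioc a b = Finset.Ico (a+1) (b+1) := by
    rw [Finset.Ico_add_one_right_eq_Icc, Finset.Icc_add_one_left_eq_Ioc]
  rw [hrw, Finset.prod_Ico_eq_prod_range]
  have hn : b + 1 - (a + 1) = b - a := by omega
  rw [hn]
  have : ∀ k ∈ Finset.range (b - a), (x + ((a + 1 + k : ℕ):ℝ)) = (x + a + 1) + k := by
    intro k _; push_cast; ring
  rw [Finset.prod_congr rfl this, gamma_prod_asc (x + a + 1) hx]
  congr 2
  have : ((b - a : ℕ):ℝ) = (b:ℝ) - a := Nat.cast_sub hab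
  rw [this]; ring

lemma final_combine (A B q E d p A' B' q' E' d' p' dd pp : ℝ)
    (hA : A' = A) (hB : B' = B) (hq : q' = q) (hE : E' = E)
    (hdd : dd = d + 1) (hpp : pp = p + 1) (hd' : d' = d) (hp' : p' = p)
    (hd : 0 < d) (hp : 0 < p) (hq0 : 0 < q) (hE0 : 0 < E) :
    Real.Gamma A / Real.Gamma dd * (Real.Gamma p / Real.Gamma q) *
      (Real.Gamma d / Real.Gamma E * (Real.Gamma B / Real.Gamma pp)) =
    Real.Gamma A' * Real.Gamma B' / (d' * p' * Real.Gamma q' * Real.Gamma E') := by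
  subst hA hB hq hE hdd hpp hd' hp'
  rw [Real.Gamma_add_one hd.ne', Real.Gamma_add_one hp.ne']
  have h1 := (Real.Gamma_pos_of_pos hd).ne'
  have h2 := (Real.Gamma_pos_of_pos hp).ne'
  have h3 := (Real.Gamma_pos_of_pos hq0).ne'
  have h4 := (Real.Gamma_pos_of_pos hE0).ne'
  field_simp

/-- For a hook `τ = (τ₁, 1^{l-1})` and `m_i = τ_i + m - i`,
`∏_{i=1}^{l} ∏_{j=i+1}^{m} (m_i+m_j+r+s+1)(m_i-m_j)
 = ∏_{i=1}^{l} Γ(τ_i+2m-2i+r+s+2) Γ(m_i+1) /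
     ((τ_i+2m-i-l+r+s+1)(τ_i+l-i) Γ(τ_i) Γ(m_i+r+s+1))`. -/
theorem hook_full_product (m l τ₁ : ℕ) (hm : 1 ≤ m) (hl1 : 1 ≤ l) (hlm : l ≤ m)
    (hτ₁ : 1 ≤ τ₁) (r s : ℝ) (hrs : -1 < r + s)
    (τ : ℕ → ℕ) (hτ : ∀ i, τ i = if i = 1 then τ₁ else if i ≤ l then 1 else 0)
    (M : ℕ → ℝ) (hM : ∀ i, M i = (τ i : ℝ) + m - i) :
    (∏ i ∈ Finset.Icc 1 l, ∏ j ∈ Finset.Icc (i + 1) m,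
        ((M i + M j + r + s + 1) * (M i - M j))) =
    ∏ i ∈ Finset.Icc 1 l,
        Real.Gamma ((τ i : ℝ) + 2 * m - 2 * i + r + s + 2) * Real.Gamma (M i + 1) /
        (((τ i : ℝ) + 2 * m - i - l + r + s + 1) * ((τ i : ℝ) + l - i) *
          Real.Gamma ((τ i : ℝ)) * Real.Gamma (M i + r + s + 1)) := by
  apply Finset.prod_congr rfl
  intro i hi
  obtain ⟨hi1, hil⟩ := Finset.mem_Icc.mp hi
  have him : i ≤ m := le_trans hil hlm
  have hmR : (1:ℝ) ≤ m := by exact_mod_cast hm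
  have hlmR : (l:ℝ) ≤ m := by exact_mod_cast hlm
  have hilR : (i:ℝ) ≤ l := by exact_mod_cast hil
  have himR : (i:ℝ) ≤ m := by exact_mod_cast him
  have hl1R : (1:ℝ) ≤ l := by exact_mod_cast hl1
  have hτR : (1:ℝ) ≤ τ₁ := by exact_mod_cast hτ₁
  rw [Finset.Icc_add_one_left_eq_Ioc, ← Finset.prod_Ioc_consecutive _ hil hlm,
      Finset.prod_mul_distrib, Finset.prod_mul_distrib]
  have hτj1 : ∀ j ∈ Finset.Ioc i l, τ j = 1 := by
    intro j hj
    obtain ⟨hj1, hj2⟩ := Finset.mem_Ioc.mp hj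
    rw [hτ]; rw [if_neg (by omega), if_pos hj2]
  have hτj0 : ∀ j ∈ Finset.Ioc l m, τ j = 0 := by
    intro j hj
    obtain ⟨hj1, hj2⟩ := Finset.mem_Ioc.mp hj
    rw [hτ]; rw [if_neg (by omega), if_neg (by omega)]
  rcases eq_or_lt_of_le hi1 with h1 | h2
  · -- case i = 1
    subst h1
    have hτi : τ 1 = τ₁ := by rw [hτ]; simp
    have hMi : M 1 = (τ₁:ℝ) + m - 1 := by rw [hM, hτi]; norm_num
    rw [hτi]
    have hSA : (∏ j ∈ Finset.Ioc 1 l, (M 1 + M j + r + s + 1)) =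
        Real.Gamma ((τ₁:ℝ) + 2*m + r + s) / Real.Gamma ((τ₁:ℝ) + 2*m - l + r + s + 1) := by
      have hterm : ∀ j ∈ Finset.Ioc 1 l, M 1 + M j + r + s + 1
          = ((τ₁:ℝ) + 2*m + r + s + 1) - (j:ℝ) := by
        intro j hj
        rw [hMi, hM j, hτj1 j hj]; push_cast; ring
      rw [Finset.prod_congr rfl hterm,
        prod_Ioc_sub 1 l hl1 ((τ₁:ℝ) + 2*m + r + s + 1) (by linarith)]
      congr 1 <;> congr 1 <;> push_cast <;> ring
    have hDA : (∏ j ∈ Finset.Ioc 1 l, (M 1 - M j)) =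
        Real.Gamma ((τ₁:ℝ) + l - 1) / Real.Gamma ((τ₁:ℝ)) := by
      have hterm : ∀ j ∈ Finset.Ioc 1 l, M 1 - M j = ((τ₁:ℝ) - 2) + (j:ℝ) := by
        intro j hj
        rw [hMi, hM j, hτj1 j hj]; push_cast; ring
      rw [Finset.prod_congr rfl hterm,
        prod_Ioc_add 1 l hl1 ((τ₁:ℝ) - 2) (by push_cast; linarith)]
      congr 1 <;> congr 1 <;> push_cast <;> ring
    have hSB : (∏ j ∈ Finset.Ioc l m, (M 1 + M j + r + s + 1)) =
        Real.Gamma ((τ₁:ℝ) + 2*m - l + r + s) / Real.Gamma ((τ₁:ℝ) + m + r + s) := by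
      have hterm : ∀ j ∈ Finset.Ioc l m, M 1 + M j + r + s + 1
          = ((τ₁:ℝ) + 2*m + r + s) - (j:ℝ) := by
        intro j hj
        rw [hMi, hM j, hτj0 j hj]; push_cast; ring
      rw [Finset.prod_congr rfl hterm,
        prod_Ioc_sub l m hlm ((τ₁:ℝ) + 2*m + r + s) (by linarith)]
      congr 1 <;> congr 1 <;> push_cast <;> ring
    have hDB : (∏ j ∈ Finset.Ioc l m, (M 1 - M j)) =
        Real.Gamma ((τ₁:ℝ) + m) / Real.Gamma ((τ₁:ℝ) + l) := by
      have hterm : ∀ j ∈ Finset.Ioc l m, M 1 - M j = ((τ₁:ℝ) - 1) + (j:ℝ) := by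
        intro j hj
        rw [hMi, hM j, hτj0 j hj]; push_cast; ring
      rw [Finset.prod_congr rfl hterm,
        prod_Ioc_add l m hlm ((τ₁:ℝ) - 1) (by push_cast; linarith)]
      congr 1 <;> congr 1 <;> push_cast <;> ring
    rw [hSA, hDA, hSB, hDB]
    exact final_combine _ _ _ _ _ _ _ _ _ _ _ _ _ _
      (by push_cast; ring) (by rw [hMi]; push_cast; ring) (by push_cast; ring)
      (by rw [hMi]; push_cast; ring)
      (by ring) (by ring) (by push_cast; ring) (by push_cast; ring)
      (by linarith) (by linarith) (by linarith) (by linarith)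
  · -- case 2 ≤ i
    have hτi : τ i = 1 := by rw [hτ]; rw [if_neg (by omega), if_pos hil]
    have hMi : M i = 1 + (m:ℝ) - i := by rw [hM, hτi]; norm_num
    rw [hτi]
    have hSA : (∏ j ∈ Finset.Ioc i l, (M i + M j + r + s + 1)) =
        Real.Gamma (2*(m:ℝ) - 2*i + r + s + 3) / Real.Gamma (2*(m:ℝ) - i - l + r + s + 3) := by
      have hterm : ∀ j ∈ Finset.Ioc i l, M i + M j + r + s + 1
          = (2*(m:ℝ) - i + r + s + 3) - (j:ℝ) := by
        intro j hj
        rw [hMi, hM j, hτj1 j hj]; push_cast; ring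
      rw [Finset.prod_congr rfl hterm,
        prod_Ioc_sub i l hil (2*(m:ℝ) - i + r + s + 3) (by linarith)]
      congr 1 <;> congr 1 <;> push_cast <;> ring
    have hDA : (∏ j ∈ Finset.Ioc i l, (M i - M j)) =
        Real.Gamma ((l:ℝ) - i + 1) / Real.Gamma (1:ℝ) := by
      have hterm : ∀ j ∈ Finset.Ioc i l, M i - M j = (-(i:ℝ)) + (j:ℝ) := by
        intro j hj
        rw [hMi, hM j, hτj1 j hj]; push_cast; ring
      rw [Finset.prod_congr rfl hterm,
        prod_Ioc_add i l hil (-(i:ℝ)) (by linarith)]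
      congr 1 <;> congr 1 <;> push_cast <;> ring
    have hSB : (∏ j ∈ Finset.Ioc l m, (M i + M j + r + s + 1)) =
        Real.Gamma (2*(m:ℝ) - i - l + r + s + 2) / Real.Gamma ((m:ℝ) - i + r + s + 2) := by
      have hterm : ∀ j ∈ Finset.Ioc l m, M i + M j + r + s + 1
          = (2*(m:ℝ) - i + r + s + 2) - (j:ℝ) := by
        intro j hj
        rw [hMi, hM j, hτj0 j hj]; push_cast; ring
      rw [Finset.prod_congr rfl hterm,
        prod_Ioc_sub l m hlm (2*(m:ℝ) - i + r + s + 2) (by linarith)]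
      congr 1 <;> congr 1 <;> push_cast <;> ring
    have hDB : (∏ j ∈ Finset.Ioc l m, (M i - M j)) =
        Real.Gamma ((m:ℝ) - i + 2) / Real.Gamma ((l:ℝ) - i + 2) := by
      have hterm : ∀ j ∈ Finset.Ioc l m, M i - M j = (1 - (i:ℝ)) + (j:ℝ) := by
        intro j hj
        rw [hMi, hM j, hτj0 j hj]; push_cast; ring
      rw [Finset.prod_congr rfl hterm,
        prod_Ioc_add l m hlm (1 - (i:ℝ)) (by linarith)]
      congr 1 <;> congr 1 <;> push_cast <;> ring
    rw [hSA, hDA, hSB, hDB]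
    exact final_combine _ _ _ _ _ _ _ _ _ _ _ _ _ _
      (by push_cast; ring) (by rw [hMi]; push_cast; ring) (by push_cast; ring)
      (by rw [hMi]; push_cast; ring)
      (by ring) (by ring) (by push_cast; ring) (by push_cast; ring)
      (by linarith) (by linarith) (by norm_num) (by linarith)
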